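/- Suppose X is a synchronized system with infinitely many points and φ is a flip for (X, σ_X). If there is a point x ∈ X such that φ(x) = x and some finitary block of X appears in x, then A(φ) ≠ ∅. -/

import Mathlib

open Set Function

/-- The map `x ↦ σᵐ(x)` on the full shift `A^ℤ`, where `σᵐ(x)_i = x_{i+m}`. -/
def shiftZ (A : Type*) (m : ℤ) : (ℤ → A) → ℤ → A := fun x i => x (i + m)

/-- The shift map `σ` on the full shift `A^ℤ`: `σ(x)_i = x_{i+1}`. -/
abbrev shiftMap (A : Type*) : (ℤ → A) → ℤ → A := shiftZ A 1

/-- The inverse shift map `σ⁻¹`: `σ⁻¹(x)_i = x_{i-1}`. -/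
abbrev shiftInv (A : Type*) : (ℤ → A) → ℤ → A := shiftZ A (-1)

/-- The reversal map `ρ`: `ρ(x)_i = x_{-i}`. -/
def revMap (A : Type*) : (ℤ → A) → ℤ → A := fun x i => x (-i)

/-- A shift space over `A`: a nonempty closed subset of `A^ℤ` with `σ(X) = X`. -/
def IsShiftSpace {A : Type*} [TopologicalSpace A] (X : Set (ℤ → A)) : Prop :=
  X.Nonempty ∧ IsClosed X ∧ shiftMap A '' X = X

/-- The word `w` occurs in `x` at position `i`, i.e. `x_{[i, i+|w|-1]} = w`. -/
def OccursAt {A : Type*} (w : List A) (x : ℤ → A) (i : ℤ) : Prop :=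
  ∀ k : Fin w.length, x (i + (k : ℕ)) = w.get k

/-- `w` is a block of `X`: it occurs in some point of `X`. -/
def IsBlockOf {A : Type*} (X : Set (ℤ → A)) (w : List A) : Prop :=
  ∃ x ∈ X, ∃ i : ℤ, OccursAt w x i

/-- `X` is irreducible: any two blocks can be joined by a block. -/
def ShiftIrreducible {A : Type*} (X : Set (ℤ → A)) : Prop :=
  ∀ u v : List A, IsBlockOf X u → IsBlockOf X v → ∃ w : List A, IsBlockOf X (u ++ w ++ v)

/-- `w` is a finitary (intrinsically synchronizing) block of `X`. -/
def IsFinitary {A : Type*} (X : Set (ℤ → A)) (w : List A) : Prop :=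
  IsBlockOf X w ∧ ∀ u v : List A, IsBlockOf X (u ++ w) → IsBlockOf X (w ++ v) →
    IsBlockOf X (u ++ w ++ v)

/-- A synchronized system: an irreducible shift space with a finitary block. -/
def IsSynchronized {A : Type*} [TopologicalSpace A] (X : Set (ℤ → A)) : Prop :=
  IsShiftSpace X ∧ ShiftIrreducible X ∧ ∃ w : List A, IsFinitary X w

/-- `φ` (as a map of the ambient full shift) restricts to a flip for `(X, σ_X)`:
a homeomorphism `X → X` with `φ ∘ φ = id` and `φ ∘ σ_X = σ_X⁻¹ ∘ φ`.
(Being a homeomorphism is automatic from continuity and `φ ∘ φ = id` on `X`.) -/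
def IsFlip {A : Type*} [TopologicalSpace A] (X : Set (ℤ → A))
    (φ : (ℤ → A) → ℤ → A) : Prop :=
  MapsTo φ X X ∧ ContinuousOn φ X ∧ (∀ x ∈ X, φ (φ x) = x) ∧
    ∀ x ∈ X, φ (shiftMap A x) = shiftInv A (φ x)

/-- The shift-flip systems `(X, σ_X, φ)` and `(Y, σ_Y, ψ)` are conjugate:
there is a homeomorphism `Φ : X → Y` with `Φ ∘ σ_X = σ_Y ∘ Φ` and `Φ ∘ φ = ψ ∘ Φ`. -/
def SystemConj {A B : Type*} [TopologicalSpace A] [TopologicalSpace B]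
    (X : Set (ℤ → A)) (φ : (ℤ → A) → ℤ → A)
    (Y : Set (ℤ → B)) (ψ : (ℤ → B) → ℤ → B) : Prop :=
  ∃ (Φ : (ℤ → A) → ℤ → B) (Ψ : (ℤ → B) → ℤ → A),
    MapsTo Φ X Y ∧ ContinuousOn Φ X ∧ MapsTo Ψ Y X ∧ ContinuousOn Ψ Y ∧
    InvOn Ψ Φ X Y ∧
    (∀ x ∈ X, Φ (shiftMap A x) = shiftMap B (Φ x)) ∧ ∀ x ∈ X, Φ (φ x) = ψ (Φ x)

/-- Two flips `φ, φ'` for `(X, σ_X)` are conjugate. -/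
def FlipConj {A : Type*} [TopologicalSpace A] (X : Set (ℤ → A))
    (φ φ' : (ℤ → A) → ℤ → A) : Prop :=
  SystemConj X φ X φ'

/-- `F(φ; n) = {x ∈ X : σ_X^n(x) = x and φ(x) = x}`. -/
def flipFix {A : Type*} (X : Set (ℤ → A)) (φ : (ℤ → A) → ℤ → A) (n : ℕ) :
    Set (ℤ → A) :=
  {x ∈ X | (shiftMap A)^[n] x = x ∧ φ x = x}

/-- `A(φ)`: points of `X` in which some finitary block occurs infinitely often and
which differ from their `φ`-image in at least one but only finitely many coordinates. -/
def flipAsym {A : Type*} (X : Set (ℤ → A)) (φ : (ℤ → A) → ℤ → A) :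
    Set (ℤ → A) :=
  {x ∈ X | (∃ w : List A, IsFinitary X w ∧ {i : ℤ | OccursAt w x i}.Infinite) ∧
    {i : ℤ | φ x i ≠ x i}.Nonempty ∧ {i : ℤ | φ x i ≠ x i}.Finite}

/-- `x` is a bi-infinite concatenation of words from `C`. -/
def IsConcat {A : Type*} (C : Set (List A)) (x : ℤ → A) : Prop :=
  ∃ t : ℤ → ℤ, StrictMono t ∧ (∀ n : ℤ, ∃ j : ℤ, t j ≤ n ∧ n < t (j + 1)) ∧
    ∀ j : ℤ, ∃ w ∈ C, t (j + 1) = t j + w.length ∧ OccursAt w x (t j)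

/-- A coded system: a shift space in which the set of bi-infinite concatenations of
words from some code `C` is dense. -/
def IsCoded {A : Type*} [TopologicalSpace A] (X : Set (ℤ → A)) : Prop :=
  IsShiftSpace X ∧ ∃ C : Set (List A), closure {x | IsConcat C x} = X

/-!
Continuity of `φ` together with `φ ∘ σ = σ⁻¹ ∘ φ` gives an `N` such that `φ(y)_j` depends only
on `y_{[-j-N, -j+N]}`. Central words `V ⊆ W` of the fixed point `x` that contain the finitary
block are finitary; irreducibility closes `W` up into a periodic point `p ∈ X`, and `q = φ p` is
periodic too and agrees with `φ x = x`, hence contains `V`, near `0`. Since `X` is infinite, some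
block `u` never occurs in `p`. Because `V` is finitary we may splice a shift of `q` on the left,
a block `V m V m V` with `u` inside `m`, and a shift of `p` on the right. `φ` exchanges the two
halves, so the resulting point differs from its image only near the middle, and it does differ
there: otherwise `u` would occur in `p`. The finitary block `V` recurs in the periodic right half.
-/

section Words

variable {A : Type*}

theorem occursAt_iff {w : List A} {x : ℤ → A} {c : ℤ} :
    OccursAt w x c ↔ ∀ (s : ℕ) (hs : s < w.length), x (c + s) = w[s] :=
  ⟨fun h s hs => h ⟨s, hs⟩, fun h k => h k k.2⟩

namespace OccursAt

variable {u v w : List A} {x y : ℤ → A} {c : ℤ}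

theorem append (hu : OccursAt u x c) (hv : OccursAt v x (c + u.length)) :
    OccursAt (u ++ v) x c := by
  rw [occursAt_iff] at *
  intro s hs
  rcases lt_or_ge s u.length with h | h
  · rw [List.getElem_append_left h, hu s h]
  · have hs' : s - u.length < v.length := by simp only [List.length_append] at hs; omega
    rw [List.getElem_append_right h, ← hv (s - u.length) hs']
    congr 1
    push_cast [h]
    ring

theorem of_append_left (h : OccursAt (u ++ v) x c) : OccursAt u x c := by
  rw [occursAt_iff] at *
  intro s hs
  rw [h s (by simp only [List.length_append]; omega), List.getElem_append_left hs]

theorem of_append_right (h : OccursAt (u ++ v) x c) : OccursAt v x (c + u.length) := by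
  rw [occursAt_iff] at *
  intro s hs
  have hs' : u.length + s < (u ++ v).length := by simp only [List.length_append]; omega
  rw [add_assoc, ← Nat.cast_add, h _ hs', List.getElem_append_right (by omega)]
  simp

theorem eqOn (hx : OccursAt w x c) (hy : OccursAt w y c) :
    EqOn x y (Ico c (c + w.length)) := by
  intro j ⟨h₁, h₂⟩
  have hj : (j - c).toNat < w.length := by omega
  have := (hx ⟨_, hj⟩).trans (hy ⟨_, hj⟩).symm
  rwa [show c + ((j - c).toNat : ℕ) = j by omega] at this

theorem congr (hx : OccursAt w x c) (h : EqOn x y (Ico c (c + w.length))) :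
    OccursAt w y c := fun k => by
  rw [← h ⟨by omega, by simp⟩, hx k]

theorem eq_of_length_eq (hu : OccursAt u x c) (hv : OccursAt v x c)
    (h : u.length = v.length) : u = v := by
  rw [occursAt_iff] at hu hv
  exact List.ext_getElem h fun s hs _ => (hu s hs).symm.trans (hv s (h ▸ hs))

theorem of_periodic {k : ℤ} (hx : Periodic x k) (h : OccursAt w x c) (m : ℤ) :
    OccursAt w x (c + m * k) := fun s => by
  rw [add_right_comm]
  exact ((hx.int_mul m) (c + s)).trans (h s)

theorem flatten_replicate (hx : Periodic x w.length) (h : OccursAt w x c) (n : ℕ) :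
    OccursAt (List.replicate n w).flatten x c := by
  induction n generalizing c with
  | zero => exact fun k => k.elim0
  | succ n ih =>
    rw [List.replicate_succ, List.flatten_cons]
    exact h.append (ih (by simpa using h.of_periodic hx 1))

end OccursAt

def window (x : ℤ → A) (c : ℤ) (n : ℕ) : List A :=
  List.ofFn fun s : Fin n => x (c + s)

@[simp]
theorem length_window (x : ℤ → A) (c : ℤ) (n : ℕ) : (window x c n).length = n :=
  List.length_ofFn

theorem occursAt_window (x : ℤ → A) (c : ℤ) (n : ℕ) : OccursAt (window x c n) x c := by
  rw [occursAt_iff]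
  intro s hs
  simp [window]

theorem window_eq_of_occursAt {w : List A} {x : ℤ → A} {c i : ℤ} {n : ℕ} (h : OccursAt w x i)
    (hc : c ≤ i) (hn : i + w.length ≤ c + n) :
    window x c n = window x c (i - c).toNat ++ w ++
      window x (i + w.length) (c + n - i - w.length).toNat := by
  refine (occursAt_window x c n).eq_of_length_eq
    (((occursAt_window x c _).append ?_).append ?_)
    (by simp only [List.length_append, length_window]; omega)
  · rwa [length_window, show c + ((i - c).toNat : ℕ) = i by omega]
  · convert occursAt_window x (i + w.length) _ using 1
    simp only [List.length_append, length_window, Nat.cast_add]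
    omega

@[simp]
theorem shiftZ_apply (m : ℤ) (x : ℤ → A) (i : ℤ) : shiftZ A m x i = x (i + m) := rfl

theorem shiftZ_add (m n : ℤ) (x : ℤ → A) : shiftZ A (m + n) x = shiftZ A m (shiftZ A n x) := by
  ext i
  simp [add_assoc]

@[simp]
theorem shiftZ_zero (x : ℤ → A) : shiftZ A 0 x = x := by
  ext i
  simp

theorem occursAt_shiftZ {w : List A} {x : ℤ → A} {m c : ℤ} :
    OccursAt w (shiftZ A m x) c ↔ OccursAt w x (c + m) := by
  simp only [OccursAt, shiftZ_apply, add_right_comm]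

theorem Function.Periodic.shiftZ {x : ℤ → A} {k : ℤ} (h : Periodic x k) (m : ℤ) :
    Periodic (shiftZ A m x) k := fun j => by
  simp only [shiftZ_apply, add_right_comm j k m, h (j + m)]

end Words

section ShiftSpace

variable {A : Type*} {X : Set (ℤ → A)}

theorem shiftZ_mem (hX : shiftMap A '' X = X) {y : ℤ → A} (hy : y ∈ X) (m : ℤ) :
    shiftZ A m y ∈ X := by
  have hsucc : ∀ z ∈ X, shiftZ A 1 z ∈ X := fun z hz => hX ▸ mem_image_of_mem _ hz
  have hpred : ∀ z ∈ X, shiftZ A (-1) z ∈ X := by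
    intro _ hz
    rw [← hX] at hz
    obtain ⟨z, hz, rfl⟩ := hz
    rwa [← shiftZ_add, neg_add_cancel, shiftZ_zero]
  induction m using Int.induction_on with
  | zero => simpa
  | succ n ih => rw [add_comm, shiftZ_add]; exact hsucc _ ih
  | pred n ih => rw [sub_eq_neg_add, shiftZ_add]; exact hpred _ ih

theorem IsBlockOf.exists_occursAt (hX : shiftMap A '' X = X) {w : List A} (hw : IsBlockOf X w)
    (c : ℤ) : ∃ z ∈ X, OccursAt w z c := by
  obtain ⟨z, hz, i, hi⟩ := hw
  exact ⟨shiftZ A (i - c) z, shiftZ_mem hX hz _, occursAt_shiftZ.2 (by rwa [add_sub_cancel])⟩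

theorem IsFinitary.append_append {w : List A} (hw : IsFinitary X w) {u v : List A}
    (h : IsBlockOf X (u ++ w ++ v)) : IsFinitary X (u ++ w ++ v) := by
  refine ⟨h, fun a b ha hb => ?_⟩
  have hleft : IsBlockOf X (a ++ u ++ w) := by
    obtain ⟨z, hz, c, hc⟩ := ha
    exact ⟨z, hz, c, (by simpa using hc : OccursAt ((a ++ u ++ w) ++ v) z c).of_append_left⟩
  have hright : IsBlockOf X (w ++ (v ++ b)) := by
    obtain ⟨z, hz, c, hc⟩ := hb
    exact ⟨z, hz, _, (by simpa using hc : OccursAt (u ++ (w ++ (v ++ b))) z c).of_append_right⟩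
  simpa using hw.2 _ _ hleft hright

theorem IsFinitary.window {w : List A} (hw : IsFinitary X w) {x : ℤ → A} (hx : x ∈ X) {i : ℤ}
    (hi : OccursAt w x i) {c : ℤ} {n : ℕ} (hc : c ≤ i) (hn : i + w.length ≤ c + n) :
    IsFinitary X (window x c n) := by
  rw [window_eq_of_occursAt hi hc hn]
  exact hw.append_append ⟨x, hx, c, window_eq_of_occursAt hi hc hn ▸ occursAt_window x c n⟩

theorem IsFinitary.isBlockOf_double {v m : List A} (hv : IsFinitary X v)
    (h : IsBlockOf X (v ++ m ++ v)) : IsBlockOf X (v ++ m ++ v ++ m ++ v) := by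
  simpa using hv.2 (v ++ m) (m ++ v) h (by simpa using h)

theorem ShiftIrreducible.exists_isBlockOf_append (hX : ShiftIrreducible X) {v u : List A}
    (hv : IsBlockOf X v) (hu : IsBlockOf X u) :
    ∃ t₁ t₂ : List A, IsBlockOf X (v ++ (t₁ ++ u ++ t₂) ++ v) := by
  obtain ⟨t₁, h₁⟩ := hX v u hv hu
  obtain ⟨t₂, h₂⟩ := hX _ v h₁ hv
  exact ⟨t₁, t₂, by simpa using h₂⟩

variable [TopologicalSpace A]

theorem mem_closure_of_forall_eqOn_Icc {S : Set (ℤ → A)} {y : ℤ → A}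
    (h : ∀ T : ℕ, ∃ z ∈ S, EqOn z y (Icc (-T : ℤ) T)) : y ∈ closure S := by
  rw [mem_closure_iff]
  intro U hU hyU
  obtain ⟨I, u, hI, hsub⟩ := isOpen_pi_iff.mp hU y hyU
  obtain ⟨z, hzS, hz⟩ := h (I.sup Int.natAbs)
  refine ⟨z, hsub fun j hj => ?_, hzS⟩
  have hjI : j.natAbs ≤ I.sup Int.natAbs := Finset.le_sup hj
  rw [hz ⟨by omega, by omega⟩]
  exact (hI j hj).2

theorem mem_of_forall_occursAt (hXs : shiftMap A '' X = X) (hXc : IsClosed X) {y : ℤ → A}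
    (h : ∀ T : ℕ, ∃ (w : List A) (c : ℤ), IsBlockOf X w ∧ OccursAt w y c ∧
      c ≤ -T ∧ T < c + w.length) : y ∈ X := by
  rw [← hXc.closure_eq]
  refine mem_closure_of_forall_eqOn_Icc fun T => ?_
  obtain ⟨w, c, hw, hy, hc, hT⟩ := h T
  obtain ⟨z, hz, hzw⟩ := hw.exists_occursAt hXs c
  exact ⟨z, hz, (hzw.eqOn hy).mono (Icc_subset_Ico hc hT)⟩

end ShiftSpace

section ReflectedWindow

variable {A : Type*}

def HasReflectedWindow (X : Set (ℤ → A)) (φ : (ℤ → A) → ℤ → A) (N : ℕ) : Prop :=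
  ∀ y ∈ X, ∀ z ∈ X, ∀ j : ℤ, EqOn y z (Icc (-j - N) (-j + N)) → φ y j = φ z j

variable {X : Set (ℤ → A)} {φ : (ℤ → A) → ℤ → A}

namespace HasReflectedWindow

variable {N : ℕ} {y z : ℤ → A}

theorem apply_eq_of_eqOn_Iio (hN : HasReflectedWindow X φ N) (hy : y ∈ X) (hz : z ∈ X) {b : ℤ}
    (h : EqOn y z (Iio b)) {j : ℤ} (hj : N - b < j) :
    φ y j = φ z j :=
  hN y hy z hz j (h.mono fun l hl => by simp only [mem_Icc, mem_Iio] at *; omega)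

theorem apply_eq_of_eqOn_Ici (hN : HasReflectedWindow X φ N) (hy : y ∈ X) (hz : z ∈ X) {a : ℤ}
    (h : EqOn y z (Ici a)) {j : ℤ} (hj : j ≤ -a - N) :
    φ y j = φ z j :=
  hN y hy z hz j (h.mono fun l hl => by simp only [mem_Icc, mem_Ici] at *; omega)

end HasReflectedWindow

end ReflectedWindow

section Flip

variable {A : Type*} [TopologicalSpace A] {X : Set (ℤ → A)}

theorem exists_eqOn_Icc_imp_eq_of_continuousOn [Finite A] [DiscreteTopology A] {B : Type*}
    [TopologicalSpace B] [DiscreteTopology B] (hX : IsClosed X) {f : (ℤ → A) → B}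
    (hf : ContinuousOn f X) :
    ∃ N : ℕ, ∀ y ∈ X, ∀ z ∈ X, EqOn y z (Icc (-N : ℤ) N) → f y = f z := by
  by_contra! h
  let E : ℕ → Set ((ℤ → A) × (ℤ → A)) := fun n =>
    (X ×ˢ X ∩ (fun v => (f v.1, f v.2)) ⁻¹' {b | b.1 ≠ b.2}) ∩
      ⋂ j ∈ Icc (-n : ℤ) n, {v | v.1 j = v.2 j}
  have hE_closed (n : ℕ) : IsClosed (E n) := by
    refine IsClosed.inter ?_ (isClosed_biInter fun j _ => isClosed_eq ?_ ?_)
    · exact ((hf.comp continuousOn_fst fun v hv => hv.1).prodMk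
        (hf.comp continuousOn_snd fun v hv => hv.2)).preimage_isClosed_of_isClosed
          (hX.prod hX) (isClosed_discrete _)
    all_goals fun_prop
  have hE_nonempty (n : ℕ) : (E n).Nonempty := by
    obtain ⟨y, hy, z, hz, hyz, hne⟩ := h n
    exact ⟨(y, z), ⟨⟨hy, hz⟩, hne⟩, mem_iInter₂.2 hyz⟩
  have hE_anti (n : ℕ) : E (n + 1) ⊆ E n := fun v hv =>
    ⟨hv.1, biInter_mono (Icc_subset_Icc (by omega) (by omega)) (fun _ _ => subset_rfl) hv.2⟩
  obtain ⟨⟨y, z⟩, hv⟩ := IsCompact.nonempty_iInter_of_sequence_nonempty_isCompact_isClosed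
    E hE_anti hE_nonempty (hE_closed 0).isCompact hE_closed
  have hyz : y = z := funext fun j =>
    mem_iInter₂.1 (mem_iInter.1 hv j.natAbs).2 j ⟨by omega, by omega⟩
  exact (mem_iInter.1 hv 0).1.2 (by rw [hyz])

variable {φ : (ℤ → A) → ℤ → A}

theorem IsFlip.apply_shiftZ (hXs : shiftMap A '' X = X) (hφ : IsFlip X φ) {y : ℤ → A}
    (hy : y ∈ X) (m : ℤ) : φ (shiftZ A m y) = shiftZ A (-m) (φ y) := by
  have hnat (n : ℕ) : ∀ y ∈ X, φ (shiftZ A n y) = shiftZ A (-n) (φ y) := by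
    induction n with
    | zero => simp
    | succ n ih =>
      intro y hy
      rw [Nat.cast_succ, add_comm, shiftZ_add, ← shiftMap, hφ.2.2.2 _ (shiftZ_mem hXs hy n),
        ih y hy, shiftInv, ← shiftZ_add]
      congr 1
      ring
  obtain ⟨n, rfl | rfl⟩ := Int.eq_nat_or_neg m
  · exact hnat n y hy
  · have := hnat n _ (shiftZ_mem hXs hy (-n))
    rw [← shiftZ_add, add_neg_cancel, shiftZ_zero] at this
    rw [this, ← shiftZ_add, neg_neg, add_neg_cancel, shiftZ_zero]

theorem IsFlip.periodic (hXs : shiftMap A '' X = X) (hφ : IsFlip X φ) {p : ℤ → A} (hp : p ∈ X)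
    {k : ℤ} (hpk : Periodic p k) : Periodic (φ p) k := by
  have h := hφ.apply_shiftZ hXs hp (-k)
  rw [show shiftZ A (-k) p = p from funext hpk.neg, neg_neg] at h
  exact fun j => (congrFun h j).symm

theorem IsFlip.exists_hasReflectedWindow [Finite A] [DiscreteTopology A]
    (hXs : shiftMap A '' X = X) (hXc : IsClosed X) (hφ : IsFlip X φ) :
    ∃ N, HasReflectedWindow X φ N := by
  obtain ⟨N, hN⟩ := exists_eqOn_Icc_imp_eq_of_continuousOn hXc
    ((continuous_apply 0).comp_continuousOn hφ.2.1)
  refine ⟨N, fun y hy z hz j hyz => ?_⟩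
  have := hN _ (shiftZ_mem hXs hy (-j)) _ (shiftZ_mem hXs hz (-j))
    fun l hl => hyz ⟨by grind, by grind⟩
  simpa [hφ.apply_shiftZ hXs hy, hφ.apply_shiftZ hXs hz] using this

end Flip

section Periodic

variable {A : Type*}

/-- The point `⋯ v v v ⋯` with a copy of `v` at `0`; the letter `a` is a junk value, read only
when `v = []`. -/
def periodicPoint (v : List A) (a : A) : ℤ → A :=
  fun j => v.getD (j % v.length).toNat a

theorem periodicPoint_periodic (v : List A) (a : A) :
    Periodic (periodicPoint v a) (v.length : ℤ) := fun j => by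
  simp [periodicPoint]

theorem occursAt_periodicPoint (v : List A) (a : A) : OccursAt v (periodicPoint v a) 0 := by
  rw [occursAt_iff]
  intro s hs
  rw [periodicPoint, zero_add, Int.emod_eq_of_lt (by omega) (by omega), Int.toNat_natCast,
    List.getD_eq_getElem]

variable {X : Set (ℤ → A)}

theorem IsFinitary.isBlockOf_append_flatten_replicate {w r : List A} (hw : IsFinitary X w)
    (h : IsBlockOf X (w ++ r ++ w)) (n : ℕ) :
    IsBlockOf X (w ++ (List.replicate n (r ++ w)).flatten) := by
  induction n with
  | zero => simpa using hw.1
  | succ n ih =>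
    simpa [List.replicate_succ] using hw.2 (w ++ r) _ h ih

variable [TopologicalSpace A]

theorem exists_periodic_mem (hXs : shiftMap A '' X = X) (hXc : IsClosed X)
    (hirr : ShiftIrreducible X) {w : List A} (hw : IsFinitary X w) (hw₀ : w ≠ []) (c : ℤ) :
    ∃ p ∈ X, ∃ k : ℤ, 0 < k ∧ Periodic p k ∧ OccursAt w p c := by
  obtain ⟨r, hr⟩ := hirr w w hw.1 hw.1
  set p := periodicPoint (w ++ r) (w.head hw₀)
  set k := ((w ++ r).length : ℤ)
  have hk_len : k = w.length + r.length := by simp [k]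
  have hk : 0 < k := by have := List.length_pos_of_ne_nil hw₀; omega
  have hpk : Periodic p k := periodicPoint_periodic _ _
  have hwrw : OccursAt (w ++ r ++ w) p 0 :=
    (occursAt_periodicPoint _ _).append (by
      simpa [hk_len] using ((occursAt_periodicPoint _ _).of_periodic hpk 1).of_append_left)
  have hrw : OccursAt (r ++ w) p w.length := by
    simpa using (by simpa using hwrw : OccursAt (w ++ (r ++ w)) p 0).of_append_right
  have hblock (n : ℕ) : OccursAt (w ++ (List.replicate n (r ++ w)).flatten) p 0 :=
    (occursAt_periodicPoint _ _).of_append_left.append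
      (by simpa using hrw.flatten_replicate (by simpa [k, add_comm] using hpk) n)
  have hp : p ∈ X := by
    refine mem_of_forall_occursAt hXs hXc fun T => ⟨_, -T * k,
      hw.isBlockOf_append_flatten_replicate hr (2 * T + 1),
      by simpa using (hblock (2 * T + 1)).of_periodic hpk (-T), by nlinarith, ?_⟩
    simp only [List.length_append, List.length_flatten, List.map_replicate, List.sum_replicate,
      smul_eq_mul]
    push_cast
    nlinarith
  exact ⟨shiftZ A (-c) p, shiftZ_mem hXs hp _, k, hk, hpk.shiftZ _,
    occursAt_shiftZ.2 (by simpa using (occursAt_periodicPoint _ _).of_append_left)⟩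

end Periodic

section Gluing

variable {A : Type*} [TopologicalSpace A] {X : Set (ℤ → A)}

theorem exists_isBlockOf_not_occursAt [T1Space A] (hX : X.Infinite) {p : ℤ → A} {k : ℤ}
    (hk : 0 < k) (hp : Periodic p k) : ∃ u, IsBlockOf X u ∧ ∀ c, ¬OccursAt u p c := by
  by_contra! h
  have hS : ((fun c => shiftZ A c p) '' Ico 0 k).Finite := (finite_Ico 0 k).image _
  refine hX (hS.subset fun y hy =>
    hS.isClosed.closure_eq ▸ mem_closure_of_forall_eqOn_Icc fun T => ?_)
  obtain ⟨c, hc⟩ := h _ ⟨y, hy, -T, occursAt_window y (-T) (2 * T + 1)⟩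
  refine ⟨shiftZ A (c + T) p, ⟨(c + T) % k, ⟨Int.emod_nonneg _ hk.ne', Int.emod_lt_of_pos _ hk⟩,
    funext fun j => ?_⟩, ?_⟩
  · conv_rhs => rw [shiftZ_apply, ← Int.emod_add_mul_ediv (c + T) k, ← add_assoc, mul_comm]
    exact ((hp.int_mul _) _).symm
  · have hc' : OccursAt (window y (-T) (2 * T + 1)) (shiftZ A (c + T) p) (-T) :=
      occursAt_shiftZ.2 (by rwa [neg_add_cancel_comm_assoc])
    exact (hc'.eqOn (occursAt_window y _ _)).mono
      (Icc_subset_Ico le_rfl (by simp only [length_window]; omega))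

theorem piecewise_Iio_mem_of_isFinitary (hXs : shiftMap A '' X = X) (hXc : IsClosed X)
    {V : List A} (hV : IsFinitary X V) {y z : ℤ → A} (hy : y ∈ X) (hz : z ∈ X) {c : ℤ}
    (hyV : OccursAt V y c) (hzV : OccursAt V z c) : (Iio c).piecewise y z ∈ X := by
  refine mem_of_forall_occursAt hXs hXc fun T => ?_
  set n := T + c.natAbs + 1
  set s := (Iio c).piecewise y z
  have hsy : EqOn s y (Iio c) := fun j hj => piecewise_eq_of_mem _ _ _ hj
  have hsz : EqOn s z (Ici c) := fun j (hj : c ≤ j) => piecewise_eq_of_notMem _ _ _ (not_lt.2 hj)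
  have hL : OccursAt (window y (c - n) n ++ V) y (c - n) :=
    (occursAt_window y _ n).append (by simpa using hyV)
  have hR : OccursAt (V ++ window z (c + V.length) n) z c := hzV.append (occursAt_window z _ n)
  refine ⟨_, c - n, hV.2 _ _ ⟨y, hy, _, hL⟩ ⟨z, hz, _, hR⟩, ?_, by omega,
    by simp only [List.length_append, length_window]; omega⟩
  rw [List.append_assoc]
  refine ((occursAt_window y _ n).congr (hsy.symm.mono ?_)).append ?_
  · exact fun j hj => by simp only [mem_Ico, mem_Iio, length_window] at *; omega
  · simpa using hR.congr (hsz.symm.mono fun j hj => hj.1)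

end Gluing

section FlipAsym

variable {A : Type*} [TopologicalSpace A] {X : Set (ℤ → A)} {φ : (ℤ → A) → ℤ → A} {N : ℕ}

/-- `φ` swaps `z` and `φ z` and reflects coordinates, so `φ y` agrees with `y` outside a bounded
set. -/
theorem mem_flipAsym_of_eqOn (hN : HasReflectedWindow X φ N) (hφ : IsFlip X φ) {y z : ℤ → A}
    (hy : y ∈ X) (hz : z ∈ X) {a b : ℤ} (hleft : EqOn y (φ z) (Iio b))
    (hright : EqOn y z (Ici a)) {u : List A} {i : ℤ} (hi : N - b < i) (hu : OccursAt u y i)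
    (hzu : ¬OccursAt u z i) {V : List A} (hV : IsFinitary X V)
    (hVz : ¬BddAbove {i | OccursAt V z i}) : y ∈ flipAsym X φ := by
  have hR (j : ℤ) (hj : N - b < j) : φ y j = z j := by
    rw [hN.apply_eq_of_eqOn_Iio hy (hφ.1 hz) hleft hj, hφ.2.2.1 z hz]
  have hL (j : ℤ) (hj : j ≤ -a - N) : φ y j = φ z j := hN.apply_eq_of_eqOn_Ici hy hz hright hj
  have hinf : {i | OccursAt V y i}.Infinite := by
    refine infinite_of_not_bddAbove fun ⟨B, hB⟩ => ?_
    obtain ⟨i', hi', hlt⟩ := not_bddAbove_iff.1 hVz (max a B)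
    have hi'y : OccursAt V y i' :=
      hi'.congr (hright.symm.mono fun j hj => (le_max_left a B).trans (hlt.le.trans hj.1))
    exact (max_lt_iff.1 hlt).2.not_ge (hB hi'y)
  have hne : {j | φ y j ≠ y j}.Nonempty := by
    by_contra hne
    have hfix (j : ℤ) : φ y j = y j := by_contra fun h => hne ⟨j, h⟩
    exact hzu (hu.congr fun j hj => (hfix j).symm.trans (hR j (by grind)))
  have hbdd : {j | φ y j ≠ y j} ⊆ Icc (min (b - 1) (-a - N)) (max a (N - b + 1)) := by
    intro j hj
    rw [mem_Icc, min_le_iff, le_max_iff]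
    by_contra hj'
    refine hj ?_
    rcases not_and_or.1 hj' with hj' | hj' <;> simp only [not_or, not_le] at hj'
    · rw [hL j (by omega), hleft (by simp only [mem_Iio]; omega)]
    · rw [hR j (by omega), hright (by simp only [mem_Ici]; omega)]
  exact ⟨hy, ⟨V, hV, hinf⟩, hne, (finite_Icc _ _).subset hbdd⟩

theorem IsFinitary.exists_mem_splice (hXs : shiftMap A '' X = X) (hXc : IsClosed X)
    {V m : List A} (hV : IsFinitary X V) (hD : IsBlockOf X (V ++ m ++ V)) {z₁ z₂ : ℤ → A}
    (hz₁ : z₁ ∈ X) (hz₂ : z₂ ∈ X) {a b : ℤ} (hab : b + (V ++ m).length = a)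
    (h₁ : OccursAt V z₁ b) (h₂ : OccursAt V z₂ a) :
    ∃ y ∈ X, EqOn y z₁ (Iio b) ∧ OccursAt (V ++ m ++ V) y b ∧ EqOn y z₂ (Ici a) := by
  obtain ⟨w, hw, hwD⟩ := hD.exists_occursAt hXs b
  have hVm : (V.length : ℤ) ≤ (V ++ m).length := by simp
  set y' := (Iio a).piecewise w z₂
  have hy' : y' ∈ X :=
    piecewise_Iio_mem_of_isFinitary hXs hXc hV hw hz₂ (hab ▸ hwD.of_append_right) h₂
  set y := (Iio b).piecewise z₁ y'
  have hyw : EqOn y w (Ico b a) := fun j hj =>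
    (piecewise_eq_of_notMem (Iio b) _ _ (not_lt.2 hj.1)).trans
      (piecewise_eq_of_mem (Iio a) _ _ hj.2)
  have hyz₂ : EqOn y z₂ (Ici a) := fun j (hj : a ≤ j) =>
    (piecewise_eq_of_notMem (Iio b) _ _ (show ¬j < b by omega)).trans
      (piecewise_eq_of_notMem (Iio a) _ _ (show ¬j < a by omega))
  have hy'b : OccursAt V y' b := hwD.of_append_left.of_append_left.congr fun j hj =>
    (piecewise_eq_of_mem (Iio a) _ _ (show j < a by simp only [mem_Ico] at hj; omega)).symm
  refine ⟨y, piecewise_Iio_mem_of_isFinitary hXs hXc hV hz₁ hy' h₁ hy'b,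
    fun j hj => piecewise_eq_of_mem _ _ _ hj, ?_, hyz₂⟩
  exact (hwD.of_append_left.congr (hyw.symm.mono fun j hj => by rwa [← hab])).append
    (hab ▸ h₂.congr (hyz₂.symm.mono fun j hj => hj.1))

theorem flipAsym_nonempty_of_periodic (hXs : shiftMap A '' X = X) (hXc : IsClosed X)
    (hirr : ShiftIrreducible X) (hφ : IsFlip X φ) (hN : HasReflectedWindow X φ N) {V : List A}
    (hV : IsFinitary X V) {p : ℤ → A} (hp : p ∈ X) {k : ℤ} (hk : 0 < k) (hpk : Periodic p k)
    (hqk : Periodic (φ p) k) {c : ℤ} (hVp : OccursAt V p c) (hVq : OccursAt V (φ p) c)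
    {u : List A} (hu : IsBlockOf X u) (hup : ∀ i, ¬OccursAt u p i) :
    (flipAsym X φ).Nonempty := by
  obtain ⟨t₁, t₂, hB⟩ := hirr.exists_isBlockOf_append hV.1 hu
  set m := t₁ ++ u ++ t₂
  set δ : ℤ := (V.length : ℤ) + m.length
  set e : ℤ := N + δ + |c| + 1
  have he : e ≤ e * k := le_mul_of_one_le_right (by positivity) hk
  set b := c + e * k - δ
  have hb : (N : ℤ) < b := by linarith [neg_abs_le c]
  set a := b + 2 * δ
  -- The halves of `y` are `σ^δ (φ p)` and `σ^(-δ) p`, which `φ` exchanges; doubling `V m V`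
  -- puts its end copies of `V` at `b` and `a = b + 2δ`, where both halves have one.
  set z := shiftZ A (-δ) p
  have hz : z ∈ X := shiftZ_mem hXs hp _
  have hφz : φ z = shiftZ A δ (φ p) := by rw [hφ.apply_shiftZ hXs hp, neg_neg]
  have hVz (n : ℤ) : OccursAt V z (a + n * k) :=
    occursAt_shiftZ.2 (by convert hVp.of_periodic hpk (e + n) using 1; ring)
  have hVφz : OccursAt V (φ z) b :=
    hφz ▸ occursAt_shiftZ.2 (by convert hVq.of_periodic hqk e using 1; ring)
  obtain ⟨y, hy, hyl, hyD, hyr⟩ := hV.exists_mem_splice hXs hXc (m := m ++ V ++ m) (a := a)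
    (by simpa using hV.isBlockOf_double hB) (hφ.1 hz) hz
    (by simp only [List.length_append, Nat.cast_add, a, δ]; ring) hVφz
    (by simpa using hVz 0)
  have hyu : OccursAt u y (b + V.length + t₁.length) := by
    have := (by simpa [m] using hyD : OccursAt ((V ++ t₁) ++ u ++ (t₂ ++ V ++ m ++ V)) y b)
    simpa [add_assoc] using this.of_append_left.of_append_right
  have hVz_unbdd : ¬BddAbove {i | OccursAt V z i} := by
    refine not_bddAbove_iff.2 fun B => ⟨a + (|B - a| + 1) * k, hVz _, ?_⟩
    linarith [le_abs_self (B - a), le_mul_of_one_le_right (by positivity : 0 ≤ |B - a| + 1) hk]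
  exact ⟨y, mem_flipAsym_of_eqOn hN hφ hy hz hyl hyr (by omega) hyu
    (fun h => hup _ (occursAt_shiftZ.1 h)) hV hVz_unbdd⟩

end FlipAsym

/-- **Lemma 2.3.** Suppose `X` is an infinite synchronized system and `φ` is a flip for
`(X, σ_X)`. If there is a point `x ∈ X` such that `φ(x) = x` and some finitary block of
`X` appears in `x`, then `A(φ) ≠ ∅`. -/
theorem flipAsym_nonempty_of_fixed_point
    {A : Type*} [Fintype A] [TopologicalSpace A] [DiscreteTopology A]
    (X : Set (ℤ → A)) (hX : IsSynchronized X) (hinf : X.Infinite)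
    (φ : (ℤ → A) → ℤ → A) (hφ : IsFlip X φ)
    (x : ℤ → A) (hx : x ∈ X) (hfix : φ x = x)
    (hw : ∃ w : List A, IsFinitary X w ∧ ∃ i : ℤ, OccursAt w x i) :
    (flipAsym X φ).Nonempty := by
  obtain ⟨⟨-, hXc, hXs⟩, hirr, -⟩ := hX
  obtain ⟨w, hw, i, hwi⟩ := hw
  obtain ⟨N, hN⟩ := hφ.exists_hasReflectedWindow hXs hXc
  set R := i.natAbs + w.length
  have hV := hw.window hx hwi (c := -R) (n := 2 * R + 1) (by omega) (by omega)
  have hW := hw.window hx hwi (c := -(R + N)) (n := 2 * (R + N) + 1) (by omega) (by omega)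
  obtain ⟨p, hp, k, hk, hpk, hWp⟩ := exists_periodic_mem hXs hXc hirr hW
    (List.ne_nil_of_length_pos (by simp)) (-(R + N))
  have hpx : EqOn p x (Icc (-(R + N) : ℤ) (R + N)) :=
    (hWp.eqOn (occursAt_window x _ _)).mono
      (Icc_subset_Ico le_rfl (by simp only [length_window]; omega))
  have hqx : EqOn (φ p) x (Icc (-R : ℤ) R) := fun j hj =>
    hfix ▸ hN p hp x hx j (hpx.mono (Icc_subset_Icc (by grind) (by grind)))
  have hVp : OccursAt (window x (-R) (2 * R + 1)) p (-R) :=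
    (occursAt_window x _ _).congr (hpx.symm.mono fun j hj => by
      simp only [length_window, mem_Ico, mem_Icc] at hj ⊢; omega)
  have hVq : OccursAt (window x (-R) (2 * R + 1)) (φ p) (-R) :=
    (occursAt_window x _ _).congr (hqx.symm.mono fun j hj => by
      simp only [length_window, mem_Ico, mem_Icc] at hj ⊢; omega)
  obtain ⟨u, hu, hup⟩ := exists_isBlockOf_not_occursAt hinf hk hpk
  exact flipAsym_nonempty_of_periodic hXs hXc hirr hφ hN hV hp hk hpk (hφ.periodic hXs hp hpk)
    hVp hVq hu hup
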